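/- arXiv:2503.18503 — 3 statements merged into one kernel-verified Lean document; each statement's English description precedes it below -/
import Mathlib

section
/- Let S classifiers each output a label in a finite label set Y, and let n_y denote the number of classifiers voting for label y. Let y_a be the label with the most votes and y_b the label with the second-most votes (ties broken by smaller index). If at most P = floor((n_{y_a} - n_{y_b} - [y_a > y_b])/2) of the S classifiers change their output (where [y_a > y_b] is 1 if the index of y_a exceeds that of y_b and 0 otherwise), then the majority-vote label (with ties broken by smaller index) remains y_a. -/
/-- Number of voters among `Fin S` whose vote under `f` is `y`. -/
def votes {S : ℕ} {Y : Type*} [DecidableEq Y] (f : Fin S → Y) (y : Y) : ℕ :=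
  (Finset.univ.filter fun i => f i = y).card

lemma votes_pert {S : ℕ} {Y : Type*} [DecidableEq Y] (g g' : Fin S → Y) (z : Y) :
    votes g' z ≤ votes g z + (Finset.univ.filter fun i => g i ≠ g' i).card := by
  unfold votes
  calc (Finset.univ.filter fun i => g' i = z).card
      ≤ ((Finset.univ.filter fun i => g i = z) ∪
          (Finset.univ.filter fun i => g i ≠ g' i)).card := by
        apply Finset.card_le_card
        intro i hi
        simp only [Finset.mem_filter, Finset.mem_union, Finset.mem_univ, true_and, ne_eq] at *
        by_cases h : g i = z
        · exact Or.inl h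
        · exact Or.inr fun he => h (he.trans hi)
    _ ≤ _ := Finset.card_union_le _ _

/-- if at most `P = ⌊(n_{y_a} - n_{y_b} - [y_a > y_b])/2⌋` of the `S`
classifiers change their output, the majority vote (ties broken toward the smaller
label) remains `y_a`. -/
theorem stmt0 {S : ℕ} {Y : Type*} [Fintype Y] [Nonempty Y] [LinearOrder Y]
    (f f' : Fin S → Y) (ya yb : Y) (hab : yb ≠ ya)
    -- `ya` is the label with the most votes, ties broken toward the smaller label
    (hya : ∀ y, y ≠ ya → votes f y < votes f ya ∨ (votes f y = votes f ya ∧ ya < y))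
    -- `yb` is the label with the second-most votes, ties broken toward the smaller label
    (hyb : ∀ y, y ≠ ya → y ≠ yb → votes f y < votes f yb ∨ (votes f y = votes f yb ∧ yb < y))
    (P : ℕ) (hP : P = (votes f ya - votes f yb - (if yb < ya then 1 else 0)) / 2)
    -- at most `P` of the `S` classifiers change their output
    (hpert : (Finset.univ.filter fun i => f i ≠ f' i).card ≤ P) :
    -- the perturbed majority vote (same tie-breaking) is still `ya`
    ∀ y, y ≠ ya → votes f' y < votes f' ya ∨ (votes f' y = votes f' ya ∧ ya < y) := by
  intro y hy
  set D := (Finset.univ.filter fun i => f i ≠ f' i).card with hD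
  have h1 : votes f' y ≤ votes f y + D := votes_pert f f' y
  have hsym : (Finset.univ.filter fun i => f' i ≠ f i).card = D := by
    rw [hD]
    congr 1
    apply Finset.filter_congr
    intro i _
    simp [ne_comm]
  have h2 : votes f ya ≤ votes f' ya + D := by
    have := votes_pert f' f ya
    rwa [hsym] at this
  -- v ≤ b, and tie-break info
  have hvb : votes f y ≤ votes f yb ∧ (votes f y = votes f yb → y ≠ yb → yb < y) := by
    by_cases hyy : y = yb
    · subst hyy; exact ⟨le_refl _, fun _ h => absurd rfl h⟩
    · rcases hyb y hy hyy with h | ⟨h, h'⟩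
      · exact ⟨le_of_lt h, fun he _ => absurd he (ne_of_lt h)⟩
      · exact ⟨le_of_eq h, fun _ _ => h'⟩
  have hba := hya yb hab
  by_cases hlt : yb < ya
  · -- ε = 1 case
    have hblt : votes f yb < votes f ya := by
      rcases hba with h | ⟨_, h⟩
      · exact h
      · exact absurd hlt (not_lt.mpr (le_of_lt h))
    rw [if_pos hlt] at hP
    have h2P : 2 * P ≤ votes f ya - votes f yb - 1 := by omega
    left
    omega
  · -- ε = 0 case, so ya < yb
    have hay : ya < yb := (hab.lt_or_gt).resolve_left (fun h => hlt h)
    have hble : votes f yb ≤ votes f ya := by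
      rcases hba with h | ⟨h, _⟩
      · exact le_of_lt h
      · exact le_of_eq h
    rw [if_neg hlt] at hP
    have h2P : 2 * P ≤ votes f ya - votes f yb := by omega
    by_cases hc : votes f' y < votes f' ya
    · exact Or.inl hc
    · right
      have heq : votes f' y = votes f' ya := by omega
      have hveq : votes f y = votes f yb := by omega
      refine ⟨heq, ?_⟩
      by_cases hyy : y = yb
      · subst hyy; exact hay
      · exact lt_trans hay (hvb.2 hveq hyy)
end

section
/- Majority-vote certified robustness: let n_{y_a} and n_{y_b} be the top and second votes among S voters over a linearly ordered finite label set, with y_a the top label under smaller-index tie-breaking. For any perturbed votes f' with |{i : f(i) ≠ f'(i)}| ≤ p where 2p ≤ n_{y_a} - n_{y_b} - [y_a > y_b], the perturbed majority vote (same tie-breaking) still returns y_a. -/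
lemma votes_aux {S : ℕ} {Y : Type*} [DecidableEq Y] (g g' : Fin S → Y) (y : Y) :
    votes g' y ≤ votes g y + (Finset.univ.filter fun i => g i ≠ g' i).card := by
  unfold votes
  calc (Finset.univ.filter fun i => g' i = y).card
      ≤ ((Finset.univ.filter fun i => g i = y) ∪
          (Finset.univ.filter fun i => g i ≠ g' i)).card := by
        apply Finset.card_le_card
        intro i hi
        simp only [Finset.mem_filter, Finset.mem_union, Finset.mem_univ, true_and,
          ne_eq] at *
        by_cases h : g i = g' i
        · left; rw [h]; exact hi
        · right; exact h
    _ ≤ _ := Finset.card_union_le _ _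

/-- majority-vote certified robustness.  If at most `p` voters change
and `2p ≤ n_{y_a} - n_{y_b} - [y_a > y_b]`, the perturbed majority vote (ties toward
the smaller label) still returns `y_a`. -/
theorem stmt11 {S : ℕ} {Y : Type*} [Fintype Y] [LinearOrder Y]
    (f f' : Fin S → Y) (ya yb : Y) (hab : yb ≠ ya)
    (hya : ∀ y, y ≠ ya → votes f y < votes f ya ∨ (votes f y = votes f ya ∧ ya < y))
    (hyb : ∀ y, y ≠ ya → y ≠ yb → votes f y < votes f yb ∨ (votes f y = votes f yb ∧ yb < y))
    (p : ℕ)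
    (hgap : (2 * p : ℤ) ≤ (votes f ya : ℤ) - (votes f yb : ℤ) - (if yb < ya then 1 else 0))
    (hpert : (Finset.univ.filter fun i => f i ≠ f' i).card ≤ p) :
    ∀ y, y ≠ ya → votes f' y < votes f' ya ∨ (votes f' y = votes f' ya ∧ ya < y) := by
  intro y hy
  have hC' : (Finset.univ.filter fun i => f' i ≠ f i).card
      = (Finset.univ.filter fun i => f i ≠ f' i).card := by
    congr 1
    apply Finset.filter_congr
    intro i _
    simp [ne_comm]
  have h1 : votes f' y ≤ votes f y + (Finset.univ.filter fun i => f i ≠ f' i).card :=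
    votes_aux f f' y
  have h2 : votes f ya ≤ votes f' ya + (Finset.univ.filter fun i => f i ≠ f' i).card := by
    have := votes_aux f' f ya
    rwa [hC'] at this
  by_cases hlt : yb < ya
  · rw [if_pos hlt] at hgap
    left
    have hvy : votes f y ≤ votes f yb := by
      by_cases hyb' : y = yb
      · subst hyb'; exact le_refl _
      · rcases hyb y hy hyb' with h | ⟨h, _⟩ <;> omega
    omega
  · rw [if_neg hlt] at hgap
    have hya_lt : ya < yb := lt_of_le_of_ne (not_lt.1 hlt) (Ne.symm hab)
    by_cases hyb' : y = yb
    · subst hyb'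
      have hle : votes f' y ≤ votes f' ya := by omega
      rcases hle.lt_or_eq with h | h
      · exact Or.inl h
      · exact Or.inr ⟨h, hya_lt⟩
    · rcases hyb y hy hyb' with h | ⟨h, hby⟩
      · left; omega
      · have hle : votes f' y ≤ votes f' ya := by omega
        rcases hle.lt_or_eq with h' | h'
        · exact Or.inl h'
        · exact Or.inr ⟨h', hya_lt.trans hby⟩
end

section
/- If the vote gap satisfies n_{y_a} ≥ n_{y_c} + 2d + [y_a > y_c] for every label y_c ≠ y_a, and at most d voters change their votes, then for every y_c ≠ y_a the perturbed counts satisfy n'_{y_a} ≥ n'_{y_c} + [y_a > y_c]. -/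
lemma votes_le {S : ℕ} {Y : Type*} [DecidableEq Y] (f f' : Fin S → Y) (y : Y) :
    votes f' y ≤ votes f y + (Finset.univ.filter fun i => f i ≠ f' i).card := by
  unfold votes
  have : (Finset.univ.filter fun i => f' i = y) ⊆
      (Finset.univ.filter fun i => f i = y) ∪ (Finset.univ.filter fun i => f i ≠ f' i) := by
    intro i hi
    simp only [Finset.mem_filter, Finset.mem_union, Finset.mem_univ, true_and] at *
    by_cases h : f i = f' i
    · left; rw [h]; exact hi
    · right; exact h
  exact le_trans (Finset.card_le_card this) (Finset.card_union_le _ _)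

/-- if `n_{y_a} ≥ n_{y_c} + 2d + [y_a > y_c]` for every `y_c ≠ y_a`
and at most `d` voters change their votes, then for every `y_c ≠ y_a` the perturbed
counts satisfy `n'_{y_a} ≥ n'_{y_c} + [y_a > y_c]`. -/
theorem stmt12 {S : ℕ} {Y : Type*} [Fintype Y] [LinearOrder Y]
    (f f' : Fin S → Y) (ya : Y) (d : ℕ)
    (hgap : ∀ yc, yc ≠ ya →
      (votes f ya : ℤ) ≥ (votes f yc : ℤ) + 2 * d + (if yc < ya then 1 else 0))
    (hpert : (Finset.univ.filter fun i => f i ≠ f' i).card ≤ d) :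
    ∀ yc, yc ≠ ya →
      (votes f' ya : ℤ) ≥ (votes f' yc : ℤ) + (if yc < ya then 1 else 0) := by
  intro yc hyc
  have h1 := votes_le f f' yc
  have h2 := votes_le f' f ya
  have hpert' : (Finset.univ.filter fun i => f' i ≠ f i).card ≤ d := by
    have : (Finset.univ.filter fun i => f' i ≠ f i) =
        (Finset.univ.filter fun i => f i ≠ f' i) := by
      ext i; simp [ne_comm]
    rw [this]; exact hpert
  have hg := hgap yc hyc
  have h1' : (votes f' yc : ℤ) ≤ votes f yc + d := by
    have := le_trans h1 (Nat.add_le_add_left hpert _)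
    exact_mod_cast this
  have h2' : (votes f ya : ℤ) ≤ votes f' ya + d := by
    have := le_trans h2 (Nat.add_le_add_left hpert' _)
    exact_mod_cast this
  linarith
end
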